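/- Let P be a regular partition of K_{m_1(n_1),m_2(n_2)} such that τ(P) is asymmetric, let G be a connected component of τ'(P) containing at least one edge, and define p by |V(G)| = n_1·|E(G)|/2 + p. Then: (1) if j_{n_1,m_2} = ⌊(m_2-1)/2⌋, then w(G) ≤ m_2·r·|E(G)|; (2) if j_{n_1,m_2} < ⌊(m_2-1)/2⌋ and p ≤ |E(G)|·(n_1/2 - 1), then w(G) ≤ m_2·r·|E(G)|; (3) if v(G) > 0, then j_{n_1,m_2} < ⌊(m_2-1)/2⌋ and G is a tree, and moreover v(G) ≤ m_2 - 2·j_{n_1,m_2} - d(G). -/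

import Mathlib

/-- Vertex type of the complete multipartite graph with `m1` parts of size `n1`
and `m2` parts of size `n2`.  The parts of size `n2` are indexed by `Fin m2`
(these play the role of `X_1, …, X_{m2}` in the paper). -/
abbrev MPV (m1 n1 m2 n2 : ℕ) : Type :=
  (Fin m1 × Fin n1) ⊕ (Fin m2 × Fin n2)

/-- The part (maximal independent set) containing a vertex. -/
def partOf {m1 n1 m2 n2 : ℕ} (v : MPV m1 n1 m2 n2) : Fin m1 ⊕ Fin m2 :=
  Sum.map Prod.fst Prod.fst v

/-- The complete multipartite graph `K_{m1(n1), m2(n2)}`. -/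
def KMP (m1 n1 m2 n2 : ℕ) : SimpleGraph (MPV m1 n1 m2 n2) :=
  SimpleGraph.comap partOf ⊤

/-- `P` is a regular partition: a partition of the vertex set each of whose parts
meets each maximal independent set in at most one vertex. -/
def IsRegularPartition {m1 n1 m2 n2 : ℕ} (P : Set (Set (MPV m1 n1 m2 n2))) : Prop :=
  Setoid.IsPartition P ∧
    ∀ p ∈ P, ∀ i : Fin m1 ⊕ Fin m2, {v | v ∈ p ∧ partOf v = i}.Subsingleton

/-- The incidence relation of the hypergraph `τ(P)`: its vertices are the parts of `P`,
its edges are the maximal independent sets, and a part is incident to a maximal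
independent set iff they intersect (for a regular partition, iff they intersect in
exactly one vertex). -/
def tauInc {m1 n1 m2 n2 : ℕ} (P : Set (Set (MPV m1 n1 m2 n2))) :
    ↥P → (Fin m1 ⊕ Fin m2) → Prop :=
  fun p i => ∃ v ∈ p.1, partOf v = i

/-- A hypergraph, given by its incidence relation, is asymmetric: its only
automorphism (pair of permutations of vertices and edges preserving incidence)
is the identity. -/
def HypAsymmetric {Vh Eh : Type*} (I : Vh → Eh → Prop) : Prop :=
  ∀ (σ : Equiv.Perm Vh) (τ : Equiv.Perm Eh),
    (∀ v e, I v e ↔ I (σ v) (τ e)) → σ = 1 ∧ τ = 1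

variable {m1 n1 m2 n2 : ℕ}

/-- Incidence of the hypergraph `τ'(P)`: only the `m1` edges of size `n1` are kept. -/
def tauInc' (P : Set (Set (MPV m1 n1 m2 n2))) (p : ↥P) (j : Fin m1) : Prop :=
  tauInc P p (Sum.inl j)

/-- The label of a vertex of `τ'(P)`: the set of indices `i ≤ m2` with the vertex
incident to the `n2`-edge `X_i`. -/
def labelOf (P : Set (Set (MPV m1 n1 m2 n2))) (p : ↥P) : Set (Fin m2) :=
  {i | tauInc P p (Sum.inr i)}

/-- The weight of a vertex of `τ'(P)`: the cardinality of its label. -/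
noncomputable def wtv (P : Set (Set (MPV m1 n1 m2 n2))) (p : ↥P) : ℕ :=
  (labelOf P p).ncard

/-- The degree of a vertex in `τ'(P)`. -/
noncomputable def degE (P : Set (Set (MPV m1 n1 m2 n2))) (p : ↥P) : ℕ :=
  {j : Fin m1 | tauInc' P p j}.ncard

/-- The incidence (bipartite) graph of `τ'(P)`, used to speak about its connected
components. -/
def incTG (P : Set (Set (MPV m1 n1 m2 n2))) : SimpleGraph (↥P ⊕ Fin m1) :=
  SimpleGraph.fromRel (fun a b => ∃ p j, a = Sum.inl p ∧ b = Sum.inr j ∧ tauInc' P p j)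

/-- The vertex set of a connected component of `τ'(P)`. -/
def compV (P : Set (Set (MPV m1 n1 m2 n2))) (c : (incTG P).ConnectedComponent) :
    Set ↥P :=
  {p | (incTG P).connectedComponentMk (Sum.inl p) = c}

/-- The edge set of a connected component of `τ'(P)`. -/
def compE (P : Set (Set (MPV m1 n1 m2 n2))) (c : (incTG P).ConnectedComponent) :
    Set (Fin m1) :=
  {j | (incTG P).connectedComponentMk (Sum.inr j) = c}

/-- The weight `w(G)` of a connected component `G` of `τ'(P)`. -/
noncomputable def wComp (P : Set (Set (MPV m1 n1 m2 n2)))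
    (c : (incTG P).ConnectedComponent) : ℕ :=
  ∑ᶠ p ∈ compV P c, wtv P p

/-- `μ(G) = Σ_{v : deg v > 2} (deg v - 2)` for a component `G` of `τ'(P)`. -/
noncomputable def muComp (P : Set (Set (MPV m1 n1 m2 n2)))
    (c : (incTG P).ConnectedComponent) : ℕ :=
  ∑ᶠ p ∈ compV P c, (degE P p - 2)

/-- `deg_1(e)`: the number of degree-1 vertices of the edge `e` of `τ'(P)`. -/
noncomputable def deg1E (P : Set (Set (MPV m1 n1 m2 n2))) (e : Fin m1) : ℕ :=
  {p | tauInc' P p e ∧ degE P p = 1}.ncard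

/-- The total weight of the degree-1 vertices of the edge `e` of `τ'(P)`. -/
noncomputable def wSE (P : Set (Set (MPV m1 n1 m2 n2))) (e : Fin m1) : ℕ :=
  ∑ᶠ p ∈ {p | tauInc' P p e ∧ degE P p = 1}, wtv P p

/-- `Σ_{i=0}^{t-1} C(m,i)`. -/
def binPartial (m t : ℕ) : ℕ :=
  ∑ i ∈ Finset.range t, Nat.choose m i

/-- The largest `t` (with `t = j' + 1` in the notation of the paper) such that
`Σ_{i=0}^{t-1} C(m,i) ≤ y`. -/
def wBt (m y : ℕ) : ℕ :=
  Nat.findGreatest (fun t => binPartial m t ≤ y) (m + 1)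

/-- The quantity `w_y`: writing `y = Σ_{i=0}^{j'} C(m,i) + k'` with `j' ≥ -1` and either
`0 ≤ k' < C(m,j'+1)`, or `k' = 0` and `j' = m`, define
`w_y = Σ_{i=0}^{j'} (m-i)·C(m,i) + k'(m-j'-1)`. -/
def wB (m y : ℕ) : ℕ :=
  (∑ i ∈ Finset.range (wBt m y), (m - i) * Nat.choose m i)
    + (y - binPartial m (wBt m y)) * (m - wBt m y)

/-- The number of defects `d(G)` of a component `G` of `τ'(P)`, counted with
multiplicity: each vertex `v` of degree at least `2` contributes `m2 - w(v)`, and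
each edge `e` contributes `w_{deg_1 e}` minus the weight of its degree-1 vertices. -/
noncomputable def dComp (P : Set (Set (MPV m1 n1 m2 n2)))
    (c : (incTG P).ConnectedComponent) : ℕ :=
  (∑ᶠ p ∈ {p ∈ compV P c | 2 ≤ degE P p}, (m2 - wtv P p))
    + ∑ᶠ e ∈ compE P c, (wB m2 (deg1E P e) - wSE P e)


/-!
Split the vertices of `G` into its leaves `V₁` (degree one) and the rest `V₂`, and let
`q = |E(G)|`. Charging each vertex of `V₂` its full defect gives
`w(G) + d(G) = m₂ |V₂| + Σ_e w_{deg₁ e}`: by asymmetry the leaves of an edge carry distinct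
labels, and `y` distinct subsets of an `m₂`-set have total size at most `w_y`.
The increments `m₂ - wBt m₂ y` of `y ↦ w_y` decrease, so `w_y` lies below a supporting line:
through `n₁ - 2` with slope `m₂ - j - 1` when `j < ⌊(m₂-1)/2⌋`, and through
`Σ_{i ≤ j} C(m₂,i)` with slope `m₂/2` when `j = ⌊(m₂-1)/2⌋`; `r` is chosen so that `m₂ r - m₂`
is the value of that line at `n₁ - 2`. The rest is linear bookkeeping with the handshake bound
`|V₁| + 2 |V₂| ≤ n₁ q` and the connectivity bound `|V(G)| ≤ (n₁ - 1) q + 1`, whose equality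
case is the tree case.
-/

open Finset

lemma binPartial_succ (m t : ℕ) : binPartial m (t + 1) = binPartial m t + m.choose t :=
  sum_range_succ _ _

lemma binPartial_mono (m : ℕ) : Monotone (binPartial m) := fun _ _ h =>
  sum_le_sum_of_subset (range_subset_range.2 h)

lemma binPartial_wBt_le (m y : ℕ) : binPartial m (wBt m y) ≤ y :=
  Nat.findGreatest_spec (P := fun t => binPartial m t ≤ y) (Nat.zero_le _) (by simp [binPartial])

lemma le_wBt {m y u : ℕ} (hu : u ≤ m + 1) (h : binPartial m u ≤ y) : u ≤ wBt m y :=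
  Nat.le_findGreatest hu h

lemma wBt_lt {m y u : ℕ} (h : y < binPartial m u) : wBt m y < u := by
  by_contra! hu
  exact (binPartial_mono m hu |>.trans (binPartial_wBt_le m y)).not_gt h

lemma wBt_mono (m : ℕ) : Monotone (wBt m) := fun _ _ h =>
  Nat.findGreatest_mono (fun _ ht => ht.trans h) le_rfl

lemma wBt_le (m y : ℕ) : wBt m y ≤ m + 1 := Nat.findGreatest_le _

lemma wBt_binPartial_add {m t k : ℕ} (ht : t ≤ m) (hk : k < m.choose t) :
    wBt m (binPartial m t + k) = t :=
  le_antisymm (Nat.lt_succ_iff.1 (wBt_lt (by rw [binPartial_succ]; omega)))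
    (le_wBt (by omega) (by omega))

lemma wB_binPartial_add {m t k : ℕ} (ht : t ≤ m) (hk : k < m.choose t) :
    wB m (binPartial m t + k) = ∑ i ∈ range t, (m - i) * m.choose i + k * (m - t) := by
  rw [wB, wBt_binPartial_add ht hk, Nat.add_sub_cancel_left]

lemma wB_succ (m y : ℕ) : wB m (y + 1) = wB m y + (m - wBt m y) := by
  set t := wBt m y with ht
  have hbt : binPartial m t ≤ y := binPartial_wBt_le m y
  rcases (wBt_mono m (Nat.le_add_right y 1)).eq_or_lt' with hsame | hnext
  · rw [wB, wB, hsame, ← ht, show y + 1 - binPartial m t = y - binPartial m t + 1 by omega]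
    ring
  -- otherwise `y + 1 = binPartial m (t + 1)` starts the next block
  have htm : t ≤ m := by have := wBt_le m (y + 1); omega
  have hy : y < binPartial m (t + 1) := by
    by_contra! h
    exact (le_wBt (by omega) h).not_gt (ht ▸ Nat.lt_succ_self t)
  have hy' : binPartial m (t + 1) ≤ y + 1 :=
    (binPartial_mono m hnext).trans (binPartial_wBt_le m (y + 1))
  have hnext' : wBt m (y + 1) = t + 1 := by
    refine le_antisymm ?_ hnext
    by_cases htm' : t + 1 ≤ m
    · refine Nat.lt_succ_iff.1 (wBt_lt ?_)
      rw [binPartial_succ m (t + 1)]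
      have := Nat.choose_pos htm'
      omega
    · have := wBt_le m (y + 1)
      omega
  rw [binPartial_succ] at hy hy'
  obtain ⟨C, hC⟩ : ∃ C, m.choose t = C + 1 := ⟨m.choose t - 1, by omega⟩
  rw [wB, wB, hnext', ← ht, sum_range_succ, show y + 1 - binPartial m (t + 1) = 0 by
    rw [binPartial_succ]; omega, show y - binPartial m t = C by omega, hC]
  ring

lemma wB_zero (m : ℕ) : wB m 0 = 0 := by
  have h : wBt m 0 = 0 := Nat.lt_one_iff.1 (wBt_lt (by simp [binPartial]))
  simp [wB, h, binPartial]

lemma card_filter_card_lt (m t : ℕ) : #{B : Finset (Fin m) | #B < t} = binPartial m t := by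
  rw [card_eq_sum_card_fiberwise (f := card) (t := range t) (fun B hB => by simpa using hB),
    binPartial]
  refine sum_congr rfl fun i hi => ?_
  rw [filter_filter, show m.choose i = #(powersetCard i (univ : Finset (Fin m))) by simp,
    powersetCard_eq_filter, powerset_univ]
  congr 1
  ext B
  simp only [mem_filter, mem_univ, true_and, and_iff_right_iff_imp]
  rintro rfl
  simpa using hi

lemma sum_card_le_wB (m : ℕ) (F : Finset (Finset (Fin m))) : ∑ A ∈ F, #A ≤ wB m #F := by
  induction hF : #F generalizing F with
  | zero => simp [card_eq_zero.1 hF, wB_zero]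
  | succ n ih =>
    obtain ⟨A, hA, hmin⟩ := F.exists_min_image card (card_pos.1 (by omega))
    have hA_le : #A ≤ m - wBt m n := by
      by_contra! hA_gt
      -- the complements of the members of `F` all have fewer than `wBt m n` elements
      have hF_le : #F ≤ binPartial m (wBt m n) := by
        rw [← card_filter_card_lt, ← card_image_of_injective F compl_injective]
        refine card_le_card fun B hB => ?_
        obtain ⟨A', hA', rfl⟩ := mem_image.1 hB
        have hAA' := hmin A' hA'
        have hA'_le : #A' ≤ m := by simpa using card_le_univ A'
        have := wBt_le m n
        simp only [mem_filter, mem_univ, card_compl, Fintype.card_fin, true_and]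
        omega
      have := binPartial_wBt_le m n
      omega
    calc ∑ B ∈ F, #B = ∑ B ∈ F.erase A, #B + #A := (sum_erase_add F _ hA).symm
      _ ≤ wB m n + (m - wBt m n) :=
          add_le_add (ih _ (by rw [card_erase_of_mem hA]; omega)) hA_le
      _ = wB m (n + 1) := (wB_succ m n).symm

lemma le_add_mul_of_increments {α : Type*} [CommRing α] [LinearOrder α] [IsStrictOrderedRing α]
    {f : ℕ → α} {y₀ : ℕ} {ℓ : α} (hleft : ∀ z < y₀, ℓ ≤ f (z + 1) - f z)
    (hright : ∀ z, y₀ ≤ z → f (z + 1) - f z ≤ ℓ) (s : ℕ) :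
    f s ≤ f y₀ + (s - y₀) * ℓ := by
  rcases le_total y₀ s with hs | hs
  · induction s, hs using Nat.le_induction with
    | base => simp
    | succ n hn ih =>
      have := hright n hn
      push_cast
      linarith
  · induction hs using Nat.decreasingInduction with
    | self => simp
    | of_succ n hn ih =>
      have := hleft n hn
      push_cast at ih
      linarith

lemma cast_wB_succ_sub (m z : ℕ) : (wB m (z + 1) : ℝ) - wB m z = ((m - wBt m z : ℕ) : ℝ) := by
  rw [wB_succ, Nat.cast_add, add_sub_cancel_left]

lemma wB_le_of_slope {m t k : ℕ} (ht : t ≤ m) (hk : k < m.choose t) (s : ℕ) :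
    (wB m s : ℝ) ≤ wB m (binPartial m t + k) + (s - (binPartial m t + k : ℕ)) * (m - t) := by
  refine le_add_mul_of_increments (f := fun z => (wB m z : ℝ)) (fun z hz => ?_)
    (fun z hz => ?_) s <;> rw [cast_wB_succ_sub]
  · have : wBt m z ≤ t := Nat.lt_succ_iff.1 (wBt_lt (by rw [binPartial_succ]; omega))
    rw [Nat.cast_sub (this.trans ht)]
    gcongr
  · have : t ≤ wBt m z := le_wBt (by omega) (by omega)
    rw [← Nat.cast_sub ht]
    exact_mod_cast Nat.sub_le_sub_left this m

lemma wB_le_of_slope_at_binPartial {m t : ℕ} (ht : t ≤ m) {ℓ : ℝ} (hℓ : m - t ≤ ℓ)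
    (hℓ' : ℓ ≤ m - t + 1) (s : ℕ) :
    (wB m s : ℝ) ≤ wB m (binPartial m t) + (s - binPartial m t) * ℓ := by
  refine le_add_mul_of_increments (f := fun z => (wB m z : ℝ)) (fun z hz => ?_)
    (fun z hz => ?_) s <;> rw [cast_wB_succ_sub]
  · have : wBt m z < t := wBt_lt hz
    rw [Nat.cast_sub (by omega)]
    refine hℓ'.trans ?_
    have : ((wBt m z : ℕ) : ℝ) + 1 ≤ t := by exact_mod_cast this
    linarith
  · have : t ≤ wBt m z := le_wBt (by omega) hz
    refine le_trans ?_ hℓ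
    rw [← Nat.cast_sub ht]
    exact_mod_cast Nat.sub_le_sub_left this m

lemma cast_wB_binPartial {m t : ℕ} (ht : t ≤ m) :
    (wB m (binPartial m t) : ℝ) = ∑ i ∈ range t, ((m : ℝ) - i) * m.choose i := by
  have h := wB_binPartial_add ht (Nat.choose_pos ht)
  rw [add_zero, zero_mul, add_zero] at h
  rw [h, Nat.cast_sum]
  exact sum_congr rfl fun i hi => by
    rw [Nat.cast_mul, Nat.cast_sub ((mem_range.1 hi).le.trans ht)]

lemma cast_wB_binPartial_add {m t k : ℕ} (ht : t ≤ m) (hk : k < m.choose t) :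
    (wB m (binPartial m t + k) : ℝ) = wB m (binPartial m t) + k * ((m : ℝ) - t) := by
  rw [cast_wB_binPartial ht, wB_binPartial_add ht hk, Nat.cast_add, Nat.cast_sum]
  push_cast [Nat.cast_sub ht]
  congr 1
  exact sum_congr rfl fun i hi => by
    rw [Nat.cast_sub ((mem_range.1 hi).le.trans ht)]

lemma HypAsymmetric.eq_of_forall_iff {Vh Eh : Type*} {I : Vh → Eh → Prop}
    (h : HypAsymmetric I) {u v : Vh} (huv : ∀ e, I u e ↔ I v e) : u = v := by
  classical
  -- swapping two vertices with the same incidences is an automorphism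
  have hσ := (h (Equiv.swap u v) 1 fun x e => by
    rcases eq_or_ne x u with rfl | hxu
    · simp [huv]
    rcases eq_or_ne x v with rfl | hxv
    · simp [huv]
    · simp [Equiv.swap_apply_of_ne_of_ne hxu hxv]).1
  exact (by simpa using congrArg (fun σ => σ u) hσ : v = u).symm

section Hypergraph

variable {P : Set (Set (MPV m1 n1 m2 n2))}

lemma IsRegularPartition.exists_mem (hreg : IsRegularPartition P) (v : MPV m1 n1 m2 n2) :
    ∃ p : ↥P, v ∈ p.1 :=
  let ⟨b, ⟨hb, hv⟩, _⟩ := hreg.1.2 v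
  ⟨⟨b, hb⟩, hv⟩

lemma IsRegularPartition.eq_of_mem (hreg : IsRegularPartition P) {v : MPV m1 n1 m2 n2}
    {p q : ↥P} (hp : v ∈ p.1) (hq : v ∈ q.1) : p = q :=
  Subtype.ext ((hreg.1.2 v).unique ⟨p.2, hp⟩ ⟨q.2, hq⟩)

lemma tauInc'_iff {p : ↥P} {e : Fin m1} :
    tauInc' P p e ↔ ∃ x, (Sum.inl (e, x) : MPV m1 n1 m2 n2) ∈ p.1 := by
  constructor
  · rintro ⟨⟨e', x⟩ | ⟨i, y⟩, hv, he⟩ <;> simp only [partOf, Sum.map_inl, Sum.map_inr,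
      Sum.inl.injEq, reduceCtorEq] at he
    exact ⟨x, he ▸ hv⟩
  · rintro ⟨x, hx⟩
    exact ⟨_, hx, rfl⟩

lemma ncard_setOf_tauInc' (hreg : IsRegularPartition P) (e : Fin m1) :
    {p : ↥P | tauInc' P p e}.ncard = n1 := by
  choose f hf using fun x : Fin n1 => hreg.exists_mem (Sum.inl (e, x))
  have hrange : {p : ↥P | tauInc' P p e} = Set.range f := by
    ext p
    simp only [Set.mem_ofPred_eq, tauInc'_iff, Set.mem_range]
    exact ⟨fun ⟨x, hx⟩ => ⟨x, hreg.eq_of_mem (hf x) hx⟩, fun ⟨x, hx⟩ => ⟨x, hx ▸ hf x⟩⟩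
  have hinj : f.Injective := fun x y hxy => by
    have := hreg.2 _ (f x).2 (Sum.inl e) ⟨hf x, rfl⟩ ⟨hxy ▸ hf y, rfl⟩
    simp only [Sum.inl.injEq, Prod.mk.injEq, true_and] at this
    exact this
  rw [hrange, Set.ncard_range_of_injective hinj, Nat.card_fin]

lemma tauInc'_iff_of_degE_eq_one {p : ↥P} {e : Fin m1} (hp : degE P p = 1)
    (he : tauInc' P p e) (e' : Fin m1) : tauInc' P p e' ↔ e' = e := by
  obtain ⟨a, ha⟩ := Set.ncard_eq_one.1 hp
  have h : ∀ e', tauInc' P p e' ↔ e' = a := fun e' => Set.ext_iff.1 ha e'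
  rw [h, (h e).1 he]

lemma labelOf_injOn (hasym : HypAsymmetric (tauInc P)) (e : Fin m1) :
    Set.InjOn (labelOf P) {p | tauInc' P p e ∧ degE P p = 1} := by
  rintro p ⟨hpe, hp⟩ q ⟨hqe, hq⟩ hpq
  refine hasym.eq_of_forall_iff fun i => ?_
  rcases i with e' | i
  · exact (tauInc'_iff_of_degE_eq_one hp hpe e').trans
      (tauInc'_iff_of_degE_eq_one hq hqe e').symm
  · exact Set.ext_iff.1 hpq i

lemma wSE_le_wB (hasym : HypAsymmetric (tauInc P)) (e : Fin m1) :
    wSE P e ≤ wB m2 (deg1E P e) := by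
  classical
  have hD := {p : ↥P | tauInc' P p e ∧ degE P p = 1}.toFinite
  have hinj : Set.InjOn (fun p => (labelOf P p).toFinset) hD.toFinset := fun p hp q hq h =>
    labelOf_injOn hasym e (by simpa using hp) (by simpa using hq) (by simpa using h)
  calc wSE P e = ∑ p ∈ hD.toFinset, #(labelOf P p).toFinset := by
        rw [wSE, finsum_mem_eq_finite_toFinset_sum _ hD]
        simp only [wtv, Set.ncard_eq_toFinset_card']
    _ = ∑ A ∈ hD.toFinset.image fun p => (labelOf P p).toFinset, #A := (sum_image hinj).symm
    _ ≤ wB m2 #(hD.toFinset.image fun p => (labelOf P p).toFinset) := sum_card_le_wB m2 _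
    _ = wB m2 (deg1E P e) := by
        rw [card_image_of_injOn hinj, deg1E, Set.ncard_eq_toFinset_card _ hD]

lemma wtv_le (p : ↥P) : wtv P p ≤ m2 :=
  (Set.ncard_le_ncard (Set.subset_univ _)).trans (by simp [Set.ncard_univ])

end Hypergraph

section Component

open Classical

variable {P : Set (Set (MPV m1 n1 m2 n2))} {c : (incTG P).ConnectedComponent}

lemma incTG_adj_inl {p : ↥P} {y : ↥P ⊕ Fin m1} :
    (incTG P).Adj (Sum.inl p) y ↔ ∃ e, y = Sum.inr e ∧ tauInc' P p e := by
  rw [incTG, SimpleGraph.fromRel_adj]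
  aesop

lemma mem_compE_of_mem_compV {p : ↥P} {e : Fin m1} (hp : p ∈ compV P c)
    (he : tauInc' P p e) : e ∈ compE P c :=
  (SimpleGraph.ConnectedComponent.connectedComponentMk_eq_of_adj
    (incTG_adj_inl.2 ⟨e, rfl, he⟩)).symm.trans hp

lemma mem_compV_of_mem_compE {p : ↥P} {e : Fin m1} (he : e ∈ compE P c)
    (hp : tauInc' P p e) : p ∈ compV P c :=
  (SimpleGraph.ConnectedComponent.connectedComponentMk_eq_of_adj
    (incTG_adj_inl.2 ⟨e, rfl, hp⟩)).trans he

lemma degE_pos (hne : (compE P c).Nonempty) {p : ↥P} (hp : p ∈ compV P c) : 0 < degE P p := by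
  obtain ⟨e₀, he₀⟩ := hne
  obtain ⟨w⟩ := SimpleGraph.ConnectedComponent.eq.1 (hp.trans he₀.symm)
  cases w with
  | cons hadj _ =>
    obtain ⟨e, -, he⟩ := incTG_adj_inl.1 hadj
    exact (Set.ncard_pos (Set.toFinite _)).2 ⟨e, he⟩

variable (P c) in
noncomputable def compVFinset : Finset ↥P := (compV P c).toFinite.toFinset

variable (P c) in
noncomputable def compEFinset : Finset (Fin m1) := (compE P c).toFinite.toFinset

@[simp] lemma coe_compEFinset : (compEFinset P c : Set (Fin m1)) = compE P c :=
  Set.Finite.coe_toFinset _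

@[simp] lemma mem_compVFinset {p : ↥P} : p ∈ compVFinset P c ↔ p ∈ compV P c :=
  Set.Finite.mem_toFinset _

@[simp] lemma mem_compEFinset {e : Fin m1} : e ∈ compEFinset P c ↔ e ∈ compE P c :=
  Set.Finite.mem_toFinset _

lemma coe_filter_compVFinset (Q : ↥P → Prop) [DecidablePred Q] :
    (({p ∈ compVFinset P c | Q p} : Finset ↥P) : Set ↥P) = {p ∈ compV P c | Q p} := by
  ext
  simp

lemma ncard_sep_compV (Q : ↥P → Prop) [DecidablePred Q] :
    {p ∈ compV P c | Q p}.ncard = #{p ∈ compVFinset P c | Q p} := by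
  rw [← coe_filter_compVFinset, Set.ncard_coe_finset]

lemma degE_eq_card_bipartiteAbove {p : ↥P} (hp : p ∈ compV P c) :
    degE P p = #((compEFinset P c).bipartiteAbove (tauInc' P) p) := by
  rw [degE, ← Set.ncard_coe_finset, coe_bipartiteAbove]
  congr 1
  ext e
  simp only [mem_compEFinset, Set.mem_ofPred_eq]
  exact ⟨fun h => ⟨mem_compE_of_mem_compV hp h, h⟩, And.right⟩

lemma card_bipartiteBelow_tauInc' (hreg : IsRegularPartition P) {e : Fin m1}
    (he : e ∈ compE P c) : #((compVFinset P c).bipartiteBelow (tauInc' P) e) = n1 := by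
  rw [← Set.ncard_coe_finset, coe_bipartiteBelow]
  convert ncard_setOf_tauInc' hreg e using 2
  ext p
  simp only [mem_compVFinset, Set.mem_ofPred_eq]
  exact ⟨And.right, fun h => ⟨mem_compV_of_mem_compE he h, h⟩⟩

lemma sum_card_bipartiteBelow_tauInc' (hreg : IsRegularPartition P) :
    ∑ e ∈ compEFinset P c, #((compVFinset P c).bipartiteBelow (tauInc' P) e)
      = n1 * (compE P c).ncard := by
  rw [sum_congr rfl fun e he => card_bipartiteBelow_tauInc' hreg (mem_compEFinset.1 he),
    sum_const, smul_eq_mul, mul_comm, ← Set.ncard_coe_finset, coe_compEFinset]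

lemma sum_degE (hreg : IsRegularPartition P) :
    ∑ p ∈ compVFinset P c, degE P p = n1 * (compE P c).ncard := by
  rw [← sum_card_bipartiteBelow_tauInc' hreg,
    ← sum_card_bipartiteAbove_eq_sum_card_bipartiteBelow]
  exact sum_congr rfl fun p hp => degE_eq_card_bipartiteAbove (mem_compVFinset.1 hp)

lemma ncard_degE_eq_one_add_two_mul_le (hreg : IsRegularPartition P) :
    {p ∈ compV P c | degE P p = 1}.ncard + 2 * {p ∈ compV P c | 2 ≤ degE P p}.ncard
      ≤ n1 * (compE P c).ncard := by
  rw [ncard_sep_compV, ncard_sep_compV, ← sum_degE hreg, card_filter, card_filter, mul_sum,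
    ← sum_add_distrib]
  exact sum_le_sum fun p _ => by split_ifs <;> omega

lemma compV_eq_union (hne : (compE P c).Nonempty) :
    compV P c = {p ∈ compV P c | degE P p = 1} ∪ {p ∈ compV P c | 2 ≤ degE P p} := by
  ext p
  refine ⟨fun hp => ?_, fun hp => hp.elim And.left And.left⟩
  rcases (by have := degE_pos hne hp; omega : degE P p = 1 ∨ 2 ≤ degE P p) with h | h
  exacts [Or.inl ⟨hp, h⟩, Or.inr ⟨hp, h⟩]

lemma disjoint_degE_eq_one_two_le :
    Disjoint {p ∈ compV P c | degE P p = 1} {p ∈ compV P c | 2 ≤ degE P p} :=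
  Set.disjoint_left.2 fun _ h₁ h₂ => by have := h₁.2; have := h₂.2; omega

lemma ncard_degE_eq_one_add_ncard (hne : (compE P c).Nonempty) :
    {p ∈ compV P c | degE P p = 1}.ncard + {p ∈ compV P c | 2 ≤ degE P p}.ncard
      = (compV P c).ncard :=
  (Set.ncard_union_eq disjoint_degE_eq_one_two_le).symm.trans
    (congrArg _ (compV_eq_union hne).symm)

lemma finsum_finsum_degE_eq_one (g : ↥P → ℕ) :
    ∑ᶠ e ∈ compE P c, ∑ᶠ p ∈ {p | tauInc' P p e ∧ degE P p = 1}, g p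
      = ∑ᶠ p ∈ {p ∈ compV P c | degE P p = 1}, g p := by
  set V₁ := {p ∈ compVFinset P c | degE P p = 1}
  have hbelow : ∀ e ∈ compE P c,
      {p | tauInc' P p e ∧ degE P p = 1} = ↑(V₁.bipartiteBelow (tauInc' P) e) := by
    intro e he
    ext p
    simp only [coe_bipartiteBelow, Set.mem_ofPred_eq, V₁, mem_filter, mem_compVFinset]
    exact ⟨fun h => ⟨⟨mem_compV_of_mem_compE he h.1, h.2⟩, h.1⟩, fun h => ⟨h.2, h.1.2⟩⟩
  rw [← coe_compEFinset, finsum_mem_coe_finset, ← coe_filter_compVFinset,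
    finsum_mem_coe_finset]
  calc ∑ e ∈ compEFinset P c, ∑ᶠ p ∈ {p | tauInc' P p e ∧ degE P p = 1}, g p
      = ∑ e ∈ compEFinset P c, ∑ p ∈ V₁.bipartiteBelow (tauInc' P) e, g p :=
        sum_congr rfl fun e he => by
          rw [hbelow e (mem_compEFinset.1 he), finsum_mem_coe_finset]
    _ = ∑ p ∈ V₁, ∑ _e ∈ (compEFinset P c).bipartiteAbove (tauInc' P) p, g p :=
        (sum_sum_bipartiteAbove_eq_sum_sum_bipartiteBelow _ _).symm
    _ = ∑ p ∈ V₁, g p := sum_congr rfl fun p hp => by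
        obtain ⟨hpV, hp1⟩ := mem_filter.1 hp
        rw [sum_const, ← degE_eq_card_bipartiteAbove (mem_compVFinset.1 hpV), hp1, one_smul]

lemma wComp_add_dComp (hasym : HypAsymmetric (tauInc P)) (hne : (compE P c).Nonempty) :
    wComp P c + dComp P c
      = m2 * {p ∈ compV P c | 2 ≤ degE P p}.ncard + ∑ᶠ e ∈ compE P c, wB m2 (deg1E P e) := by
  have hsplit : wComp P c = ∑ᶠ p ∈ {p ∈ compV P c | degE P p = 1}, wtv P p
      + ∑ᶠ p ∈ {p ∈ compV P c | 2 ≤ degE P p}, wtv P p := by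
    rw [wComp, ← finsum_mem_union disjoint_degE_eq_one_two_le (Set.toFinite _)
      (Set.toFinite _), ← compV_eq_union hne]
  have hV₁ : ∑ᶠ p ∈ {p ∈ compV P c | degE P p = 1}, wtv P p = ∑ᶠ e ∈ compE P c, wSE P e :=
    (finsum_finsum_degE_eq_one (wtv P)).symm
  have hedges : ∑ᶠ e ∈ compE P c, wSE P e + ∑ᶠ e ∈ compE P c, (wB m2 (deg1E P e) - wSE P e)
      = ∑ᶠ e ∈ compE P c, wB m2 (deg1E P e) := by
    rw [← finsum_mem_add_distrib (Set.toFinite _)]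
    exact finsum_mem_congr rfl fun e _ => Nat.add_sub_cancel' (wSE_le_wB hasym e)
  have hV₂ : ∑ᶠ p ∈ {p ∈ compV P c | 2 ≤ degE P p}, wtv P p
      + ∑ᶠ p ∈ {p ∈ compV P c | 2 ≤ degE P p}, (m2 - wtv P p)
      = m2 * {p ∈ compV P c | 2 ≤ degE P p}.ncard := by
    rw [← finsum_mem_add_distrib (Set.toFinite _), ← finsum_one, mul_finsum_mem]
    exact finsum_mem_congr rfl fun p _ => by rw [mul_one]; exact Nat.add_sub_cancel' (wtv_le p)
  rw [hsplit, hV₁, dComp]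
  omega

lemma finsum_deg1E :
    ∑ᶠ e ∈ compE P c, deg1E P e = {p ∈ compV P c | degE P p = 1}.ncard :=
  (finsum_mem_congr rfl fun _ _ => finsum_one.symm).trans
    ((finsum_finsum_degE_eq_one fun _ => 1).trans finsum_one)

lemma wComp_add_dComp_le (hasym : HypAsymmetric (tauInc P)) (hne : (compE P c).Nonempty)
    {y₀ : ℕ} {ℓ : ℝ} (hline : ∀ s : ℕ, (wB m2 s : ℝ) ≤ wB m2 y₀ + (s - y₀) * ℓ) :
    (wComp P c : ℝ) + dComp P c
      ≤ m2 * {p ∈ compV P c | 2 ≤ degE P p}.ncard + (compE P c).ncard * wB m2 y₀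
        + ({p ∈ compV P c | degE P p = 1}.ncard - (compE P c).ncard * y₀) * ℓ := by
  rw [← Nat.cast_add, wComp_add_dComp hasym hne, ← finsum_deg1E, ← coe_compEFinset,
    finsum_mem_coe_finset, finsum_mem_coe_finset, Set.ncard_coe_finset]
  have := sum_le_sum fun e (_ : e ∈ compEFinset P c) => hline (deg1E P e)
  rw [sum_add_distrib, sum_const, ← sum_mul, sum_sub_distrib, sum_const, nsmul_eq_mul,
    nsmul_eq_mul] at this
  push_cast
  linarith

lemma card_edgeSet_toSimpleGraph_le (hreg : IsRegularPartition P)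
    (c : (incTG P).ConnectedComponent) :
    Nat.card c.toSimpleGraph.edgeSet ≤ n1 * (compE P c).ncard := by
  set I := {x ∈ compVFinset P c ×ˢ compEFinset P c | tauInc' P x.1 x.2}
  have hI : #I = n1 * (compE P c).ncard := by
    rw [card_filter, sum_product_right, ← sum_card_bipartiteBelow_tauInc' hreg]
    exact sum_congr rfl fun e _ => (card_filter _ _).symm
  let f : I → c.toSimpleGraph.edgeSet := fun x =>
    have hx := mem_filter.1 x.2
    ⟨s(⟨Sum.inl x.1.1, mem_compVFinset.1 (mem_product.1 hx.1).1⟩,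
      ⟨Sum.inr x.1.2, mem_compEFinset.1 (mem_product.1 hx.1).2⟩), incTG_adj_inl.2 ⟨_, rfl, hx.2⟩⟩
  have hf : f.Surjective := by
    rintro ⟨z, hz⟩
    induction z using Sym2.ind with | _ a b => ?_
    obtain ⟨a, ha⟩ := a
    obtain ⟨b, hb⟩ := b
    rw [SimpleGraph.mem_edgeSet, SimpleGraph.ConnectedComponent.toSimpleGraph,
      SimpleGraph.induce_adj] at hz
    simp only [incTG, SimpleGraph.fromRel_adj] at hz
    obtain ⟨-, ⟨p, e, rfl, rfl, h⟩ | ⟨p, e, rfl, rfl, h⟩⟩ := hz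
    · exact ⟨⟨(p, e), by simp [I, h]; exact ⟨ha, hb⟩⟩, rfl⟩
    · exact ⟨⟨(p, e), by simp [I, h]; exact ⟨hb, ha⟩⟩, Subtype.ext Sym2.eq_swap⟩
  exact hI ▸ (Nat.card_le_card_of_surjective f hf).trans_eq (Nat.card_eq_finsetCard I)

lemma ncard_compV_add_ncard_compE_le (hreg : IsRegularPartition P)
    (c : (incTG P).ConnectedComponent) :
    (compV P c).ncard + (compE P c).ncard ≤ n1 * (compE P c).ncard + 1 := by
  have hvert : Nat.card c = (compV P c).ncard + (compE P c).ncard := by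
    rw [show Nat.card c = Nat.card c.supp from rfl, Nat.card_coe_set_eq,
      ← Set.image_preimage_inl_union_image_preimage_inr c.supp,
      Set.ncard_union_eq Set.disjoint_image_inl_image_inr,
      Set.ncard_image_of_injective _ Sum.inl_injective,
      Set.ncard_image_of_injective _ Sum.inr_injective]
    rfl
  have := c.connected_toSimpleGraph.card_vert_le_card_edgeSet_add_one
  have := card_edgeSet_toSimpleGraph_le hreg c
  omega

end Component

section Value

variable {P : Set (Set (MPV m1 n1 m2 n2))} {c : (incTG P).ConnectedComponent}

lemma wComp_add_dComp_le_excess (hasym : HypAsymmetric (tauInc P))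
    (hne : (compE P c).Nonempty) {y₀ k₀ : ℕ} {ℓ : ℝ}
    (hline : ∀ s : ℕ, (wB m2 s : ℝ) ≤ wB m2 y₀ + (s - y₀) * ℓ) (hn1 : n1 = 2 + y₀ + k₀) :
    (wComp P c : ℝ) + dComp P c
      ≤ (m2 + wB m2 y₀ + k₀ * ℓ) * (compE P c).ncard
        + m2 * ({p ∈ compV P c | 2 ≤ degE P p}.ncard - (compE P c).ncard)
        + ({p ∈ compV P c | degE P p = 1}.ncard - (n1 - 2) * (compE P c).ncard) * ℓ := by
  have hn1' : (n1 : ℝ) = 2 + y₀ + k₀ := by exact_mod_cast hn1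
  rw [hn1']
  linear_combination wComp_add_dComp_le hasym hne hline

lemma cast_ncard_degE_eq_one_add_two_mul_le (hreg : IsRegularPartition P) :
    ({p ∈ compV P c | degE P p = 1}.ncard : ℝ) + 2 * {p ∈ compV P c | 2 ≤ degE P p}.ncard
      ≤ n1 * (compE P c).ncard := by
  exact_mod_cast ncard_degE_eq_one_add_two_mul_le hreg

lemma wComp_le_of_two_mul_slope_eq (hreg : IsRegularPartition P)
    (hasym : HypAsymmetric (tauInc P)) (hne : (compE P c).Nonempty) {y₀ k₀ : ℕ} {ℓ : ℝ}
    (hline : ∀ s : ℕ, (wB m2 s : ℝ) ≤ wB m2 y₀ + (s - y₀) * ℓ) (hn1 : n1 = 2 + y₀ + k₀)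
    (hℓ : 2 * ℓ = m2) :
    (wComp P c : ℝ) ≤ (m2 + wB m2 y₀ + k₀ * ℓ) * (compE P c).ncard := by
  have hwd := wComp_add_dComp_le_excess hasym hne hline hn1
  have hdeg := cast_ncard_degE_eq_one_add_two_mul_le (c := c) hreg
  have hd : (0 : ℝ) ≤ dComp P c := Nat.cast_nonneg _
  have hℓ0 : 0 ≤ ℓ := by have : (0 : ℝ) ≤ m2 := Nat.cast_nonneg _; linarith
  rw [← hℓ] at hwd ⊢
  nlinarith [mul_le_mul_of_nonneg_left hdeg hℓ0]

lemma wComp_le_of_ncard_compV_le (hreg : IsRegularPartition P)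
    (hasym : HypAsymmetric (tauInc P)) (hne : (compE P c).Nonempty) {y₀ k₀ : ℕ} {ℓ : ℝ}
    (hline : ∀ s : ℕ, (wB m2 s : ℝ) ≤ wB m2 y₀ + (s - y₀) * ℓ) (hn1 : n1 = 2 + y₀ + k₀)
    (hℓ : m2 ≤ 2 * ℓ) (hℓ' : ℓ ≤ m2)
    (hV : (compV P c).ncard ≤ (n1 - 1) * (compE P c).ncard) :
    (wComp P c : ℝ) ≤ (m2 + wB m2 y₀ + k₀ * ℓ) * (compE P c).ncard := by
  have hwd := wComp_add_dComp_le_excess hasym hne hline hn1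
  have hdeg := cast_ncard_degE_eq_one_add_two_mul_le (c := c) hreg
  have hsplit : ({p ∈ compV P c | degE P p = 1}.ncard : ℝ)
      + {p ∈ compV P c | 2 ≤ degE P p}.ncard = (compV P c).ncard := by
    exact_mod_cast ncard_degE_eq_one_add_ncard hne
  have hV' : ((compV P c).ncard : ℝ) ≤ (n1 - 1) * (compE P c).ncard := by
    rw [← Nat.cast_pred (by omega)]
    exact_mod_cast hV
  have hd : (0 : ℝ) ≤ dComp P c := Nat.cast_nonneg _
  have hℓ0 : 0 ≤ ℓ := by have : (0 : ℝ) ≤ m2 := Nat.cast_nonneg _; linarith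
  rcases le_total ((compE P c).ncard : ℝ) {p ∈ compV P c | 2 ≤ degE P p}.ncard with h | h
  · nlinarith [mul_le_mul_of_nonneg_left hdeg hℓ0,
      mul_le_mul_of_nonneg_left h (by linarith : (0 : ℝ) ≤ 2 * ℓ - m2)]
  · nlinarith [mul_le_mul_of_nonneg_left hV' hℓ0,
      mul_le_mul_of_nonneg_left h (by linarith : (0 : ℝ) ≤ m2 - ℓ)]

lemma wComp_add_dComp_le_of_ncard_compV_eq (hreg : IsRegularPartition P)
    (hasym : HypAsymmetric (tauInc P)) (hne : (compE P c).Nonempty) {y₀ k₀ : ℕ} {ℓ : ℝ}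
    (hline : ∀ s : ℕ, (wB m2 s : ℝ) ≤ wB m2 y₀ + (s - y₀) * ℓ) (hn1 : n1 = 2 + y₀ + k₀)
    (hℓ' : ℓ ≤ m2) (hV : (compV P c).ncard = (n1 - 1) * (compE P c).ncard + 1) :
    (wComp P c : ℝ) + dComp P c
      ≤ (m2 + wB m2 y₀ + k₀ * ℓ) * (compE P c).ncard + (2 * ℓ - m2) := by
  have hwd := wComp_add_dComp_le_excess hasym hne hline hn1
  have hdeg := cast_ncard_degE_eq_one_add_two_mul_le (c := c) hreg
  have hsplit : ({p ∈ compV P c | degE P p = 1}.ncard : ℝ)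
      + {p ∈ compV P c | 2 ≤ degE P p}.ncard = (compV P c).ncard := by
    exact_mod_cast ncard_degE_eq_one_add_ncard hne
  have hV' : ((compV P c).ncard : ℝ) = (n1 - 1) * (compE P c).ncard + 1 := by
    rw [← Nat.cast_pred (by omega)]
    exact_mod_cast hV
  have hexcess : ({p ∈ compV P c | degE P p = 1}.ncard : ℝ) - (n1 - 2) * (compE P c).ncard
      = (compE P c).ncard + 1 - {p ∈ compV P c | 2 ≤ degE P p}.ncard := by linarith
  rw [hexcess] at hwd
  nlinarith [mul_nonneg (by linarith : (0 : ℝ) ≤ m2 - ℓ)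
    (by linarith : (0 : ℝ) ≤ (compE P c).ncard - {p ∈ compV P c | 2 ≤ degE P p}.ncard - 1)]

lemma ncard_compV_eq_of_not_le (hreg : IsRegularPartition P)
    (h : ¬(compV P c).ncard ≤ (n1 - 1) * (compE P c).ncard) :
    (compV P c).ncard = (n1 - 1) * (compE P c).ncard + 1 := by
  have := ncard_compV_add_ncard_compE_le hreg c
  rw [Nat.sub_one_mul] at h ⊢
  omega

end Value

lemma mul_one_add_sum_div_add {m t : ℕ} (hm : 0 < m) (ht : t ≤ m) (x : ℝ) :
    (m : ℝ) * (1 + ∑ i ∈ range t, ((m - i : ℝ) / m) * m.choose i + x)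
      = m + wB m (binPartial m t) + m * x := by
  have hm' : (m : ℝ) ≠ 0 := by positivity
  rw [cast_wB_binPartial ht, mul_add, mul_add, mul_one, mul_sum]
  congr 2
  exact sum_congr rfl fun i _ => by field_simp

lemma mul_one_add_sum_div_sub_mul {m t k : ℕ} (hm : 0 < m) (ht : t ≤ m) (hk : k < m.choose t)
    {j : ℝ} (htj : (t : ℝ) = j + 1) :
    (m : ℝ) * (1 + ∑ i ∈ range t, ((m - i : ℝ) / m) * m.choose i + ((m - j - 1) / m) * k)
      = m + wB m (binPartial m t + k) := by
  have hm' : (m : ℝ) ≠ 0 := by positivity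
  rw [mul_one_add_sum_div_add hm ht, cast_wB_binPartial_add ht hk, htj]
  field_simp
  ring

lemma mul_one_add_sum_div_add_div_two {m t : ℕ} (hm : 0 < m) (ht : t ≤ m) (k : ℕ) :
    (m : ℝ) * (1 + ∑ i ∈ range t, ((m - i : ℝ) / m) * m.choose i + k / 2)
      = m + wB m (binPartial m t) + k * (m / 2) := by
  rw [mul_one_add_sum_div_add hm ht]
  ring

lemma le_sub_one_mul_of_eq_add {v n q : ℕ} {p : ℚ} (hn : 1 ≤ n) (hv : (v : ℚ) = n * q / 2 + p)
    (hp : p ≤ q * ((n : ℚ) / 2 - 1)) : v ≤ (n - 1) * q := by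
  have : (v : ℚ) ≤ ((n - 1 : ℕ) : ℚ) * q := by
    rw [Nat.cast_pred hn, hv]
    linarith
  exact_mod_cast this

theorem component_value_bound_general
    (m1 n1 m2 n2 : ℕ) (hm2 : 1 ≤ m2)
    (j : ℤ) (k : ℕ) (r : ℝ)
    (hj : -1 ≤ j)
    (hjk : (n1 : ℤ) = 2 + (∑ i ∈ Finset.range (j + 1).toNat, (Nat.choose m2 i : ℤ)) + k)
    (hcond : (j < (((m2 - 1) / 2 : ℕ) : ℤ) ∧ (k : ℤ) < Nat.choose m2 (j + 1).toNat)
      ∨ j = (((m2 - 1) / 2 : ℕ) : ℤ))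
    (hr : r = 1 + (∑ i ∈ Finset.range (j + 1).toNat, ((m2 - i : ℝ) / m2) * Nat.choose m2 i)
      + (if j < (((m2 - 1) / 2 : ℕ) : ℤ) then (((m2 : ℝ) - j - 1) / m2) * k
          else (k : ℝ) / 2))
    (P : Set (Set (MPV m1 n1 m2 n2)))
    (hreg : IsRegularPartition P) (hasym : HypAsymmetric (tauInc P))
    (c : (incTG P).ConnectedComponent) (hne : (compE P c).Nonempty)
    (p : ℚ)
    (hp : ((compV P c).ncard : ℚ) = n1 * (compE P c).ncard / 2 + p) :
    (j = (((m2 - 1) / 2 : ℕ) : ℤ) →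
      (wComp P c : ℝ) ≤ m2 * r * (compE P c).ncard) ∧
    (j < (((m2 - 1) / 2 : ℕ) : ℤ) → p ≤ (compE P c).ncard * ((n1 : ℚ) / 2 - 1) →
      (wComp P c : ℝ) ≤ m2 * r * (compE P c).ncard) ∧
    (0 < (wComp P c : ℝ) - r * m2 * (compE P c).ncard →
      j < (((m2 - 1) / 2 : ℕ) : ℤ) ∧
      (compV P c).ncard = (n1 - 1) * (compE P c).ncard + 1 ∧
      (wComp P c : ℝ) - r * m2 * (compE P c).ncard
        ≤ (m2 : ℝ) - 2 * j - dComp P c) := by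
  set t := (j + 1).toNat
  have ht : (t : ℤ) = j + 1 := Int.toNat_of_nonneg (by omega)
  have hn1 : n1 = 2 + binPartial m2 t + k := by rw [binPartial]; exact_mod_cast hjk
  rw [mul_comm r]
  rcases hcond with ⟨hlt, hk⟩ | heq
  · have hk : k < m2.choose t := by exact_mod_cast hk
    have h2t : (2 * t : ℝ) ≤ m2 := by exact_mod_cast (by omega : 2 * t ≤ m2)
    have hslope : (m2 : ℝ) - t ≤ m2 := by linarith [(t.cast_nonneg : (0 : ℝ) ≤ t)]
    have hline := wB_le_of_slope (by omega) hk
    rw [hr, if_pos hlt, mul_one_add_sum_div_sub_mul hm2 (by omega) hk (by exact_mod_cast ht)]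
    have hnontree := wComp_le_of_ncard_compV_le hreg hasym hne hline (k₀ := 0) (by omega)
      (by linarith) hslope
    simp only [CharP.cast_eq_zero, zero_mul, add_zero] at hnontree
    refine ⟨fun h => absurd h hlt.ne, fun _ hpq => hnontree ?_, fun hv => ?_⟩
    · exact le_sub_one_mul_of_eq_add (by omega) hp hpq
    have htree := ncard_compV_eq_of_not_le hreg fun h => (hnontree h).not_gt (by linarith)
    have := wComp_add_dComp_le_of_ncard_compV_eq hreg hasym hne hline (k₀ := 0) (by omega)
      hslope htree
    have htj : (t : ℝ) = j + 1 := by exact_mod_cast ht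
    exact ⟨hlt, htree, by push_cast at this; linarith⟩
  · have htm : t ≤ m2 := by omega
    have h2t : (m2 : ℝ) ≤ 2 * t ∧ (2 * t : ℝ) ≤ m2 + 2 := by
      exact_mod_cast (by omega : m2 ≤ 2 * t ∧ 2 * t ≤ m2 + 2)
    have hline := wB_le_of_slope_at_binPartial htm (ℓ := (m2 : ℝ) / 2) (by linarith)
      (by linarith)
    have hbound := wComp_le_of_two_mul_slope_eq hreg hasym hne hline hn1 (by ring)
    rw [hr, if_neg (by omega), mul_one_add_sum_div_add_div_two hm2 htm]
    exact ⟨fun _ => hbound, fun h => absurd heq h.ne, fun hv => absurd hbound (by linarith)⟩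

/-- **Corollary 4.6.** Let `j = j_{n1,m2}` (an integer `≥ -1`), `k = k_{n1,m2}` and
`r = r_{n1,m2}`, and let `G` be a connected component of `τ'(P)` with at least one edge,
where `τ(P)` is asymmetric.  Then:
(1) if `j = ⌊(m2-1)/2⌋` then `w(G) ≤ m2·r·|E(G)|`;
(2) if `j < ⌊(m2-1)/2⌋` and `p ≤ |E(G)|(n1/2 - 1)` then `w(G) ≤ m2·r·|E(G)|`;
(3) if `G` has positive value `v(G) = w(G) - r·m2·|E(G)| > 0`, then
`j < ⌊(m2-1)/2⌋`, `G` is a tree, and `v(G) ≤ m2 - 2j - d(G)`. -/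
theorem component_value_bound
    (m1 n1 m2 n2 : ℕ) (hn1 : 2 ≤ n1) (hm2 : 1 ≤ m2)
    (j : ℤ) (k : ℕ) (r : ℝ)
    (hj : -1 ≤ j)
    (hjk : (n1 : ℤ) = 2 + (∑ i ∈ Finset.range (j + 1).toNat, (Nat.choose m2 i : ℤ)) + k)
    (hcond : (j < (((m2 - 1) / 2 : ℕ) : ℤ) ∧ (k : ℤ) < Nat.choose m2 (j + 1).toNat)
      ∨ j = (((m2 - 1) / 2 : ℕ) : ℤ))
    (hr : r = 1 + (∑ i ∈ Finset.range (j + 1).toNat, ((m2 - i : ℝ) / m2) * Nat.choose m2 i)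
      + (if j < (((m2 - 1) / 2 : ℕ) : ℤ) then (((m2 : ℝ) - j - 1) / m2) * k
          else (k : ℝ) / 2))
    (P : Set (Set (MPV m1 n1 m2 n2)))
    (hreg : IsRegularPartition P) (hasym : HypAsymmetric (tauInc P))
    (c : (incTG P).ConnectedComponent) (hne : (compE P c).Nonempty)
    (p : ℚ)
    (hp : ((compV P c).ncard : ℚ) = n1 * (compE P c).ncard / 2 + p) :
    (j = (((m2 - 1) / 2 : ℕ) : ℤ) →
      (wComp P c : ℝ) ≤ m2 * r * (compE P c).ncard) ∧
    (j < (((m2 - 1) / 2 : ℕ) : ℤ) → p ≤ (compE P c).ncard * ((n1 : ℚ) / 2 - 1) →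
      (wComp P c : ℝ) ≤ m2 * r * (compE P c).ncard) ∧
    (0 < (wComp P c : ℝ) - r * m2 * (compE P c).ncard →
      j < (((m2 - 1) / 2 : ℕ) : ℤ) ∧
      (compV P c).ncard = (n1 - 1) * (compE P c).ncard + 1 ∧
      (wComp P c : ℝ) - r * m2 * (compE P c).ncard
        ≤ (m2 : ℝ) - 2 * j - dComp P c) :=
  component_value_bound_general m1 n1 m2 n2 hm2 j k r hj hjk hcond hr P hreg hasym c hne p hp
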